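/- arXiv:2011.10083 — 2 statements merged into one kernel-verified Lean document; each statement's English description precedes it below -/
import Mathlib

section
/- Let A be a one-generator left brace of multipermutation level 2 and let x ∈ A be such that A = A(x). Then the subgroup of Aut(A,+) generated by λ(A) = {λ_a : a ∈ A} equals the cyclic subgroup generated by λ_x; in particular, for every a ∈ A there exists k ∈ ℤ with λ_a = λ_x^k, so A is λ-cyclic. -/
/-- A left brace structure on a type carrying an abelian additive group structure `+`
and a (multiplicative) group structure `∘` (written `*`). -/
class LeftBrace (A : Type*) [AddCommGroup A] [Group A] : Prop where
  compat : ∀ a b c : A, a * (b + c) + a = a * b + a * c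

section Brace

variable {A : Type*} [AddCommGroup A] [Group A]

/-- The map `λ_a : b ↦ -a + a ∘ b`, as a permutation of `A`. -/
def lam (a : A) : Equiv.Perm A where
  toFun b := -a + a * b
  invFun b := a⁻¹ * (a + b)
  left_inv b := by simp
  right_inv b := by simp

/-- A subset of a left brace is a sub-left-brace if it is simultaneously (the carrier of)
a subgroup of `(A,+)` and a subgroup of `(A,∘)`. -/
def IsSubBrace (B : Set A) : Prop :=
  ∃ (Sa : AddSubgroup A) (Sm : Subgroup A), (Sa : Set A) = B ∧ (Sm : Set A) = B

/-- `A(x)`: the smallest sub-left-brace containing `x`. -/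
def braceClosure (x : A) : Set A := ⋂₀ {B : Set A | IsSubBrace B ∧ x ∈ B}

end Brace

/-- The socle series of a left brace: `Soc_0 = {0}`,
`Soc_{n+1} = {a | ∀ b, a + b - a∘b ∈ Soc_n}`. -/
def socSeq (A : Type*) [AddCommGroup A] [Group A] : ℕ → Set A
  | 0 => {0}
  | n + 1 => {a | ∀ b, a + b - a * b ∈ socSeq A n}

/-- A left brace has multipermutation level `n` if `n` is minimal with `Soc_n(A) = A`. -/
def BraceMPL (A : Type*) [AddCommGroup A] [Group A] (n : ℕ) : Prop :=
  socSeq A n = Set.univ ∧ ∀ m < n, socSeq A m ≠ Set.univ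


section Aux

variable {A : Type*} [AddCommGroup A] [Group A] [LeftBrace A]

lemma lb_mul_add (a b c : A) : a * (b + c) = a * b + a * c - a := by
  have := LeftBrace.compat a b c
  linear_combination (norm := abel) this

lemma lb_mul_zero (a : A) : a * (0 : A) = a := by
  have := LeftBrace.compat a 0 0
  rw [add_zero] at this
  exact (add_left_cancel this).symm

lemma lb_one_eq_zero : (1 : A) = 0 := by
  have := lb_mul_zero (1 : A)
  rw [one_mul] at this
  exact this.symm

lemma lb_mul_neg (a b : A) : a * (-b) = a + a - a * b := by
  have h := lb_mul_add a b (-b)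
  rw [add_neg_cancel, lb_mul_zero] at h
  linear_combination (norm := abel) -h

lemma lam_mul (a b : A) : lam (a * b) = lam a * lam b := by
  ext c
  show -(a * b) + (a * b) * c = -a + a * (-b + b * c)
  rw [lb_mul_add a (-b) (b * c), lb_mul_neg, mul_assoc]
  abel

lemma lam_one : lam (1 : A) = 1 := by
  ext b
  show -(1:A) + 1 * b = b
  rw [one_mul, lb_one_eq_zero]
  abel

lemma lam_add (hmpl : BraceMPL A 2) (a b : A) : lam (a + b) = lam a * lam b := by
  set s := a + b - a * b with hs
  have hsS : s ∈ socSeq A 1 := by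
    have : a ∈ socSeq A 2 := hmpl.1 ▸ Set.mem_univ a
    exact this b
  have hsmul : ∀ c : A, s * c = s + c := by
    intro c
    have := hsS c
    simp only [socSeq, Set.mem_singleton_iff] at this
    linear_combination (norm := abel) -this
  have habs : a + b = s * (a * b) := by
    rw [hsmul]; rw [hs]; abel
  have hlams : lam s = 1 := by
    ext c
    show -s + s * c = c
    rw [hsmul]; abel
  rw [habs, lam_mul, hlams, one_mul, lam_mul]

lemma lam_neg (hmpl : BraceMPL A 2) (a : A) : lam (-a) = (lam a)⁻¹ := by
  have h := lam_add hmpl a (-a)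
  rw [add_neg_cancel, ← lb_one_eq_zero, lam_one] at h
  exact (eq_inv_of_mul_eq_one_right h.symm)

lemma lam_inv (a : A) : lam (a⁻¹ : A) = (lam a)⁻¹ := by
  have h : lam a * lam (a⁻¹) = 1 := by
    rw [← lam_mul, mul_inv_cancel, lam_one]
  exact eq_inv_of_mul_eq_one_left (by rw [← lam_mul, inv_mul_cancel, lam_one])

end Aux

/-- If `A = A(x)` is a one-generator left brace of multipermutation
level 2, then the subgroup of `Aut(A,+)` generated by `λ(A)` is the cyclic subgroup
generated by `λ_x`; in particular every `λ_a` is a power of `λ_x`, so `A` is λ-cyclic. -/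
theorem stmt15 {A : Type} [AddCommGroup A] [Group A] [LeftBrace A]
    (x : A) (hx : braceClosure x = Set.univ) (hmpl : BraceMPL A 2) :
    Subgroup.closure (Set.range fun a : A => lam a) = Subgroup.zpowers (lam x) ∧
    ∀ a : A, ∃ k : ℤ, lam a = lam x ^ k := by
  have key : ∀ a : A, ∃ k : ℤ, lam a = lam x ^ k := by
    intro a
    let Sa : AddSubgroup A :=
      { carrier := {a : A | ∃ k : ℤ, lam a = lam x ^ k}
        zero_mem' := ⟨0, by rw [← lb_one_eq_zero, lam_one, zpow_zero]⟩
        add_mem' := by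
          rintro p q ⟨k, hk⟩ ⟨l, hl⟩
          exact ⟨k + l, by rw [lam_add hmpl, hk, hl, zpow_add]⟩
        neg_mem' := by
          rintro p ⟨k, hk⟩
          exact ⟨-k, by rw [lam_neg hmpl, hk, zpow_neg]⟩ }
    let Sm : Subgroup A :=
      { carrier := {a : A | ∃ k : ℤ, lam a = lam x ^ k}
        one_mem' := ⟨0, by rw [lam_one, zpow_zero]⟩
        mul_mem' := by
          rintro p q ⟨k, hk⟩ ⟨l, hl⟩
          exact ⟨k + l, by rw [lam_mul, hk, hl, zpow_add]⟩
        inv_mem' := by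
          rintro p ⟨k, hk⟩
          exact ⟨-k, by rw [lam_inv, hk, zpow_neg]⟩ }
    have hB : IsSubBrace {a : A | ∃ k : ℤ, lam a = lam x ^ k} := ⟨Sa, Sm, rfl, rfl⟩
    have hmem : a ∈ braceClosure x := hx ▸ Set.mem_univ a
    exact hmem _ ⟨hB, ⟨1, by rw [zpow_one]⟩⟩
  constructor
  · apply le_antisymm
    · rw [Subgroup.closure_le]
      rintro f ⟨a, rfl⟩
      obtain ⟨k, hk⟩ := key a
      exact ⟨k, hk.symm⟩
    · exact Subgroup.zpowers_le.mpr (Subgroup.subset_closure ⟨x, rfl⟩)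
  · exact key
end

section
/- Let A be a one-generator left brace of multipermutation level 2. Then there exist an automorphism ψ of the additive group (A,+) and an element x ∈ A such that: (1) the orbit {ψ^z(x) : z ∈ ℤ} has more than one element and generates the group (A,+); and (2) for all k ∈ ℕ and all integers a_1, …, a_k, z_1, …, z_k, if a_1 ψ^{z_1}(x) + ⋯ + a_k ψ^{z_k}(x) = 0 then ψ^{a_1 + ⋯ + a_k} = id_A. -/
/-!
Since `Soc₂(A) = A`, every `a + b - a ∘ b` lies in the socle, and translating by a socle element
`s` does not change `λ` (as `u + s = u ∘ λ_{u⁻¹}(s)` and the socle is `λ`-invariant); hence `λ : (A, +) → Aut(A, +)` is additive and `λ_{λ_a b} = λ_b`.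
Put `ψ = λ_x`. Then `λ` is constantly `ψ` on the `ψ`-orbit of `x`, so it sends the additive
subgroup `B` generated by that orbit onto `⟨ψ⟩`. As `B` is `ψ`-invariant, it is a sub-brace,
so `B = A(x) = A`; and `λ(∑ aᵢ ψ^{zᵢ}(x)) = ψ^{∑ aᵢ}` gives the relation property.
If the orbit were `{x}`, then `ψ` would fix `B = A`, so `λ` would be trivial and `Soc₁(A) = A`.
-/

theorem AddAut.zsmul_apply_mem_closure_orbit_iff {A : Type*} [AddGroup A] (ψ : AddAut A)
    (x : A) (k : ℤ) {v : A} :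
    (k • ψ) v ∈ AddSubgroup.closure (Set.range fun z : ℤ => (z • ψ) x) ↔
      v ∈ AddSubgroup.closure (Set.range fun z : ℤ => (z • ψ) x) := by
  set B := AddSubgroup.closure (Set.range fun z : ℤ => (z • ψ) x)
  have hmaps : ∀ k : ℤ, ∀ v ∈ B, (k • ψ) v ∈ B := by
    intro k v hv
    have hle : B.map (k • ψ).toAddMonoidHom ≤ B := by
      rw [AddMonoidHom.map_closure, AddSubgroup.closure_le]
      rintro _ ⟨_, ⟨z, rfl⟩, rfl⟩
      exact AddSubgroup.subset_closure ⟨k + z, by simp only [add_zsmul]; rfl⟩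
    exact hle ⟨v, hv, rfl⟩
  refine ⟨fun hkv => ?_, hmaps k v⟩
  simpa [← AddAut.add_apply, ← add_zsmul] using hmaps (-k) _ hkv

namespace LeftBrace

section Basic

variable {A : Type*} [AddCommGroup A] [Group A]

theorem lam_apply (a b : A) : lam a b = -a + a * b := rfl

theorem mul_eq_add_lam (a b : A) : a * b = a + lam a b := by
  rw [lam_apply]; abel

theorem braceClosure_subset {x : A} {S : Set A} (hS : IsSubBrace S) (hx : x ∈ S) :
    braceClosure x ⊆ S :=
  Set.sInter_subset_of_mem ⟨hS, hx⟩

variable [LeftBrace A]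

theorem one_eq_zero : (1 : A) = 0 := by
  simpa using compat (1 : A) 0 0

theorem lam_add (a b c : A) : lam a (b + c) = lam a b + lam a c := by
  have h : a * (b + c) = a * b + a * c - a := by rw [← compat]; abel
  simp only [lam_apply, h]; abel

def lamAut (a : A) : AddAut A := { lam a with map_add' := lam_add a }

@[simp]
theorem lamAut_apply (a b : A) : lamAut a b = lam a b := rfl

theorem lamAut_mul (a b : A) : lamAut (a * b) = lamAut a + lamAut b := by
  ext c
  have h : lam a (lam b c) = -lam a b + lam a (b * c) := by
    rw [lam_apply b c, ← lamAut_apply, map_add, map_neg]; rfl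
  rw [AddAut.add_apply, lamAut_apply, lamAut_apply, lamAut_apply, h, lam_apply, lam_apply,
    lam_apply, mul_assoc]
  abel

theorem lamAut_one : lamAut (1 : A) = 0 := by
  ext b
  simp [lam_apply, one_eq_zero]

theorem lamAut_zero : lamAut (0 : A) = 0 := by
  rw [← one_eq_zero, lamAut_one]

theorem lamAut_inv (a : A) : lamAut a⁻¹ = -lamAut a :=
  eq_neg_of_add_eq_zero_left (by rw [← lamAut_mul, inv_mul_cancel, lamAut_one])

theorem lam_self_inv (a : A) : lam a a⁻¹ = -a :=
  eq_neg_of_add_eq_zero_right (by rw [← mul_eq_add_lam, mul_inv_cancel, one_eq_zero])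

theorem mem_socSeq_one_iff (a : A) : a ∈ socSeq A 1 ↔ lamAut a = 0 := by
  simp only [socSeq, Set.mem_ofPred_eq, Set.mem_singleton_iff, AddEquiv.ext_iff,
    lamAut_apply, AddAut.zero_apply]
  refine forall_congr' fun b => ?_
  rw [lam_apply, neg_add_eq_iff_eq_add, sub_eq_zero, eq_comm]

theorem conj_eq_lam_of_lamAut_eq_zero {s : A} (hs : lamAut s = 0) (c : A) :
    c * s * c⁻¹ = lam c s := by
  have hsc : lam s c⁻¹ = c⁻¹ := by rw [← lamAut_apply, hs, AddAut.zero_apply]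
  rw [mul_eq_add_lam (c * s), ← lamAut_apply, lamAut_mul, AddAut.add_apply, lamAut_apply,
    lamAut_apply, hsc, lam_self_inv, mul_eq_add_lam]
  abel

theorem lamAut_lam_of_lamAut_eq_zero {s : A} (hs : lamAut s = 0) (c : A) :
    lamAut (lam c s) = 0 := by
  rw [← conj_eq_lam_of_lamAut_eq_zero hs, lamAut_mul, lamAut_mul, hs, lamAut_inv, add_zero,
    add_neg_cancel]

theorem lamAut_add_of_lamAut_eq_zero (u : A) {s : A} (hs : lamAut s = 0) :
    lamAut (u + s) = lamAut u := by
  have h : u * lam u⁻¹ s = u + s := by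
    rw [mul_eq_add_lam, ← lamAut_apply, ← lamAut_apply, ← AddAut.add_apply, ← lamAut_mul,
      mul_inv_cancel, lamAut_one, AddAut.zero_apply]
  rw [← h, lamAut_mul, lamAut_lam_of_lamAut_eq_zero hs, add_zero]

theorem isSubBrace_of_lam_mem_iff (B : AddSubgroup A)
    (hB : ∀ u ∈ B, ∀ v, lam u v ∈ B ↔ v ∈ B) : IsSubBrace (B : Set A) := by
  refine ⟨B, { carrier := B, one_mem' := ?one, mul_mem' := ?mul, inv_mem' := ?inv }, rfl, rfl⟩
  case one => simp [one_eq_zero]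
  case mul =>
    intro u v hu hv
    rw [mul_eq_add_lam]
    exact B.add_mem hu ((hB u hu v).mpr hv)
  case inv =>
    intro u hu
    refine (hB u hu u⁻¹).mp ?_
    rw [lam_self_inv]
    exact B.neg_mem hu

end Basic

section SocTwo

variable {A : Type*} [AddCommGroup A] [Group A] [LeftBrace A]

theorem lamAut_add (h2 : socSeq A 2 = Set.univ) (a b : A) :
    lamAut (a + b) = lamAut a + lamAut b := by
  have hs : lamAut (a + b - a * b) = 0 :=
    (mem_socSeq_one_iff _).mp ((h2 ▸ Set.mem_univ a : a ∈ socSeq A 2) b)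
  calc lamAut (a + b) = lamAut (a * b + (a + b - a * b)) := by rw [add_sub_cancel]
    _ = lamAut (a * b) := lamAut_add_of_lamAut_eq_zero _ hs
    _ = lamAut a + lamAut b := lamAut_mul a b

def lamAddHom (h2 : socSeq A 2 = Set.univ) : A →+ AddAut A :=
  AddMonoidHom.mk' lamAut (lamAut_add h2)

@[simp]
theorem lamAddHom_apply (h2 : socSeq A 2 = Set.univ) (a : A) : lamAddHom h2 a = lamAut a := rfl

theorem lamAut_lam (h2 : socSeq A 2 = Set.univ) (a b : A) : lamAut (lam a b) = lamAut b := by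
  rw [lam_apply, ← lamAddHom_apply h2, map_add, map_neg, lamAddHom_apply, lamAddHom_apply,
    lamAut_mul, neg_add_cancel_left]

theorem lamAut_zsmul_apply (h2 : socSeq A 2 = Set.univ) (a y : A) (k : ℤ) :
    lamAut ((k • lamAut a) y) = lamAut y := by
  rw [← lamAddHom_apply h2 a, ← map_zsmul, lamAddHom_apply, lamAut_apply, lamAut_lam h2]

theorem lamAut_sum_zsmul_orbit (h2 : socSeq A 2 = Set.univ) (x : A) {ι : Type*}
    (s : Finset ι) (a z : ι → ℤ) :
    lamAut (∑ i ∈ s, a i • (z i • lamAut x) x) = (∑ i ∈ s, a i) • lamAut x := by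
  induction s using Finset.cons_induction with
  | empty => simp [lamAut_zero]
  | cons i s hi ih =>
    rw [Finset.sum_cons, Finset.sum_cons, lamAut_add h2, ih, add_zsmul, ← lamAddHom_apply h2,
      map_zsmul, lamAddHom_apply, lamAut_zsmul_apply h2]

theorem map_lamAddHom_closure_orbit (h2 : socSeq A 2 = Set.univ) (x : A) :
    (AddSubgroup.closure (Set.range fun z : ℤ => (z • lamAut x) x)).map (lamAddHom h2) =
      AddSubgroup.zmultiples (lamAut x) := by
  rw [AddMonoidHom.map_closure, ← Set.range_comp, AddSubgroup.zmultiples_eq_closure]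
  have hconst : (lamAddHom h2 ∘ fun z : ℤ => (z • lamAut x) x) = fun _ => lamAut x :=
    funext (lamAut_zsmul_apply h2 x x)
  rw [hconst, Set.range_const]

theorem closure_orbit_eq_top (h2 : socSeq A 2 = Set.univ) {x : A}
    (hx : braceClosure x = Set.univ) :
    AddSubgroup.closure (Set.range fun z : ℤ => (z • lamAut x) x) = ⊤ := by
  set B := AddSubgroup.closure (Set.range fun z : ℤ => (z • lamAut x) x)
  have hB : IsSubBrace (B : Set A) := isSubBrace_of_lam_mem_iff B fun u hu v => by
    obtain ⟨k, hk⟩ : lamAut u ∈ AddSubgroup.zmultiples (lamAut x) :=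
      map_lamAddHom_closure_orbit h2 x ▸ AddSubgroup.mem_map_of_mem _ hu
    rw [← lamAut_apply, ← hk]
    exact (lamAut x).zsmul_apply_mem_closure_orbit_iff x k
  have hxB : x ∈ B := AddSubgroup.subset_closure ⟨0, rfl⟩
  rw [AddSubgroup.eq_top_iff']
  exact fun a => braceClosure_subset hB hxB (hx ▸ Set.mem_univ a)

theorem lamAut_mem_zmultiples (h2 : socSeq A 2 = Set.univ) {x : A}
    (hx : braceClosure x = Set.univ) (u : A) :
    lamAut u ∈ AddSubgroup.zmultiples (lamAut x) := by
  rw [← map_lamAddHom_closure_orbit h2 x, closure_orbit_eq_top h2 hx]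
  exact AddSubgroup.mem_map_of_mem _ (AddSubgroup.mem_top u)

theorem lam_self_ne_self (h2 : socSeq A 2 = Set.univ) {x : A} (hx : braceClosure x = Set.univ)
    (h1 : socSeq A 1 ≠ Set.univ) : lam x x ≠ x := by
  intro hfix
  have hfixes : Set.EqOn (lamAut x).toAddMonoidHom (AddMonoidHom.id A)
      (Set.range fun z : ℤ => (z • lamAut x) x) := by
    rintro _ ⟨z, rfl⟩
    change (lamAut x + z • lamAut x) x = (z • lamAut x) x
    rw [(AddCommute.self_zsmul (lamAut x) z).eq, AddAut.add_apply, lamAut_apply, hfix]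
  have hlam_x : lamAut x = 0 := by
    ext v
    exact AddMonoidHom.eqOn_closure hfixes (closure_orbit_eq_top h2 hx ▸ AddSubgroup.mem_top v)
  refine h1 (Set.eq_univ_of_forall fun u => (mem_socSeq_one_iff u).mpr ?_)
  obtain ⟨k, hk⟩ := lamAut_mem_zmultiples h2 hx u
  rw [← hk]
  exact (congrArg (k • ·) hlam_x).trans (zsmul_zero k)

end SocTwo

end LeftBrace

/-- A one-generator left brace of multipermutation level 2 yields an
automorphism `ψ` of `(A,+)` and an element `x` whose `ψ`-orbit is nontrivial and
generates `(A,+)`, such that any additive relation `∑ aᵢ ψ^{zᵢ}(x) = 0` forces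
`ψ^{∑ aᵢ} = id`. -/
theorem stmt18 {A : Type} [AddCommGroup A] [Group A] [LeftBrace A]
    (hone : ∃ x : A, braceClosure x = Set.univ) (hmpl : BraceMPL A 2) :
    ∃ (ψ : AddAut A) (x : A),
      (Set.range fun z : ℤ => (z • ψ) x).Nontrivial ∧
      AddSubgroup.closure (Set.range fun z : ℤ => (z • ψ) x) = ⊤ ∧
      ∀ (m : ℕ) (a z : Fin m → ℤ),
        (∑ i, a i • (z i • ψ) x) = 0 → (∑ i, a i) • ψ = 0 := by
  obtain ⟨x, hx⟩ := hone
  obtain ⟨h2, hmin⟩ := hmpl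
  refine ⟨LeftBrace.lamAut x, x, ?_, LeftBrace.closure_orbit_eq_top h2 hx, fun m a z hrel => ?_⟩
  · refine ⟨((1 : ℤ) • LeftBrace.lamAut x) x, ⟨1, rfl⟩,
      ((0 : ℤ) • LeftBrace.lamAut x) x, ⟨0, rfl⟩, ?_⟩
    simpa using LeftBrace.lam_self_ne_self h2 hx (hmin 1 one_lt_two)
  · rw [← LeftBrace.lamAut_sum_zsmul_orbit h2, hrel, LeftBrace.lamAut_zero]
end
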